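/- Suppose the CutWidth W satisfies W ≥ Δ, and let A be a nonempty bag with 0 < γ(A) < W. Then there exists an (A–∅)-crusade ω̂ = (ω̂₀, …, ω̂_k) of width z(ω̂) = γ(A) with the following properties: (i) ω̂_i ≠ ω̂_{i−1} for all i ∈ {1, …, k}; (ii) ω̂_i ⊊ ω̂_{i−1} for all i ∈ {2, …, k}; (iii) γ(ω̂_i) ≤ γ(A) for all i ∈ {0, …, k}; (iv) γ(ω̂₁) ≥ γ(A) − Δ; (v) c(A) ≥ c(ω̂₁) − Δ·(E + 2), i.e., c(A) + (n + 4)·Δ ≥ c(ω̂₁) + 2W; and (vi) there exists an index l ∈ {0, …, k} such that ω̂_l is an improvement bag. -/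

import Mathlib

open Finset

variable {V : Type*} [Fintype V] [DecidableEq V]

/-- The cut of a bag `A`: the number of edges of `G` with exactly one endpoint in `A`. -/
def cut (G : SimpleGraph V) [DecidableRel G.Adj] (A : Finset V) : ℕ :=
  ((A ×ˢ Aᶜ).filter fun p => G.Adj p.1 p.2).card

/-- An `(A–B)`-crusade of length `k+1`: a sequence of bags starting at `A`, ending at `B`,
removing at most one node at each step. -/
def IsCrusade (A B : Finset V) (k : ℕ) (ω : ℕ → Finset V) : Prop :=
  ω 0 = A ∧ ω k = B ∧ ∀ i < k, (ω i \ ω (i + 1)).card ≤ 1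

/-- The width of a crusade: the maximum cut encountered after the first bag. -/
def width (G : SimpleGraph V) [DecidableRel G.Adj] (k : ℕ) (ω : ℕ → Finset V) : ℕ :=
  (Finset.Icc 1 k).sup fun i => cut G (ω i)

/-- The resilience of a bag `A`: the minimum width over all `(A–∅)`-crusades. -/
noncomputable def resilience (G : SimpleGraph V) [DecidableRel G.Adj] (A : Finset V) : ℕ :=
  sInf {w | ∃ (k : ℕ) (ω : ℕ → Finset V), IsCrusade A ∅ k ω ∧ width G k ω = w}

/-- A crusade is monotone if each bag contains the next. -/
def IsMonotone (k : ℕ) (ω : ℕ → Finset V) : Prop :=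
  ∀ i < k, ω (i + 1) ⊆ ω i

/-- The CutWidth of `G`: the minimum width over all monotone `(V–∅)`-crusades. -/
noncomputable def cutWidth (G : SimpleGraph V) [DecidableRel G.Adj] : ℕ :=
  sInf {w | ∃ (k : ℕ) (ω : ℕ → Finset V),
    IsCrusade Finset.univ ∅ k ω ∧ IsMonotone k ω ∧ width G k ω = w}

/-!
Among the crusades from `A` of width `γ(A)`, take one of minimal length and, among those, of
minimal total weight of its bags, bags being weighed by their cut first and their size second.
Minimal length forbids repeated bags. Submodularity of the cut lets one replace two consecutive
bags `ωᵢ, ωᵢ₊₁` by `ωᵢ ∪ ωᵢ₊₁, ωᵢ₊₁` or by `ωᵢ, ωᵢ ∩ ωᵢ₊₁` without increasing the width, so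
minimal weight makes the crusade monotone after its first step.

For (v), prefix the monotone tail `A ∪ ω₁, ω₂, …` with a monotone crusade from `V` down to
`A ∪ ω₁`. The result is a monotone `(V–∅)`-crusade, so its width is at least `W > γ(A)` and is
attained on a bag `D` with `A ∪ ω₁ ⊆ D`; since the cut is `Δ`-Lipschitz in the bag,
`2 W ≤ 2 c(D) ≤ c(A ∪ ω₁) + Δ (n - |A ∪ ω₁|)`, while `c(ω₁) ≤ γ(A)` and
`2 γ(A) ≤ c(A) + Δ |A|` by the same estimate along any crusade from `A` to `∅`.

For (vi): in a connected graph exactly the bags with at least two vertices have positive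
resilience, and the last bag of the crusade with at least two vertices has exactly two.
-/

set_option linter.unusedSectionVars false

section Cut

variable (G : SimpleGraph V) [DecidableRel G.Adj]

@[simp] lemma cut_empty : cut G ∅ = 0 := by simp [cut]

@[simp] lemma cut_compl (X : Finset V) : cut G Xᶜ = cut G X := by
  refine Finset.card_nbij' Prod.swap Prod.swap ?_ ?_ (fun _ _ => rfl) (fun _ _ => rfl) <;>
    · rintro ⟨a, b⟩
      simp [G.adj_comm, and_comm]

@[simp] lemma cut_univ : cut G univ = 0 := by
  rw [← compl_empty, cut_compl, cut_empty]

lemma cut_insert_le (a : V) (X : Finset V) : cut G (insert a X) ≤ cut G X + G.maxDegree := by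
  calc cut G (insert a X)
      ≤ #(((X ×ˢ Xᶜ).filter fun p => G.Adj p.1 p.2) ∪ (G.neighborFinset a).image (a, ·)) := by
        refine card_le_card fun p hp => ?_
        simp only [mem_filter, mem_product, mem_compl, mem_insert, not_or] at hp
        rcases hp with ⟨⟨rfl | h1, h2⟩, hadj⟩
        · exact mem_union_right _ (mem_image.2 ⟨p.2, by simpa using hadj, rfl⟩)
        · exact mem_union_left _ (by simp [h1, h2.2, hadj])
    _ ≤ cut G X + #((G.neighborFinset a).image (a, ·)) := card_union_le _ _
    _ ≤ cut G X + G.maxDegree := by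
        gcongr
        exact card_image_le.trans ((G.card_neighborFinset_eq_degree a).trans_le
          (G.degree_le_maxDegree a))

lemma cut_union_le (X S : Finset V) : cut G (X ∪ S) ≤ cut G X + G.maxDegree * #S := by
  induction S using Finset.induction_on with
  | empty => simp
  | insert a S ha ih =>
    rw [union_insert, card_insert_of_notMem ha, mul_add_one]
    linarith [cut_insert_le G a (X ∪ S)]

lemma cut_sdiff_le (X S : Finset V) : cut G (X \ S) ≤ cut G X + G.maxDegree * #S := by
  have : X \ S = (Xᶜ ∪ S)ᶜ := by rw [compl_union, compl_compl, sdiff_eq_inter_compl]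
  rw [this, cut_compl, ← cut_compl G X]
  exact cut_union_le G _ _

lemma two_mul_cut_le {S D T : Finset V} (hSD : S ⊆ D) (hDT : D ⊆ T) :
    2 * cut G D ≤ cut G S + cut G T + G.maxDegree * (#T - #S) := by
  have hS : cut G D ≤ cut G S + G.maxDegree * #(D \ S) := by
    simpa [union_sdiff_of_subset hSD] using cut_union_le G S (D \ S)
  have hT : cut G D ≤ cut G T + G.maxDegree * #(T \ D) := by
    simpa only [Finset.sdiff_sdiff_eq_self hDT] using cut_sdiff_le G T (T \ D)
  have hcard : #(D \ S) + #(T \ D) = #T - #S := by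
    rw [card_sdiff_of_subset hSD, card_sdiff_of_subset hDT]
    have := card_le_card hSD
    have := card_le_card hDT
    omega
  rw [← hcard, mul_add]
  omega

lemma cut_eq_sum (X : Finset V) :
    cut G X = ∑ p : V × V, if G.Adj p.1 p.2 ∧ p.1 ∈ X ∧ p.2 ∉ X then 1 else 0 := by
  rw [← card_filter, cut]
  congr 1
  ext p
  simp [and_comm, and_assoc]

lemma cut_inter_add_cut_union_le (X Y : Finset V) :
    cut G (X ∩ Y) + cut G (X ∪ Y) ≤ cut G X + cut G Y := by
  simp only [cut_eq_sum, ← sum_add_distrib]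
  refine sum_le_sum fun p _ => ?_
  by_cases G.Adj p.1 p.2 <;> by_cases p.1 ∈ X <;> by_cases p.1 ∈ Y <;> by_cases p.2 ∈ X <;>
    by_cases p.2 ∈ Y <;> simp [*]

lemma cut_pos (hconn : G.Connected) {X : Finset V} (hX : X.Nonempty) (hXc : Xᶜ.Nonempty) :
    0 < cut G X := by
  obtain ⟨u, hu⟩ := hX
  obtain ⟨v, hv⟩ := hXc
  obtain ⟨d, -, hd⟩ := (hconn.preconnected u v).some.exists_boundary_dart (X : Set V) hu
    (by simpa using hv)
  exact card_pos.2 ⟨d.toProd, by simpa using And.intro hd d.adj⟩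

end Cut

def crusadeAppend (k : ℕ) (ω σ : ℕ → Finset V) : ℕ → Finset V :=
  fun i => if i ≤ k then ω i else σ (i - k)

lemma crusadeAppend_of_le (h : ω k = σ 0) (hi : k ≤ i) : crusadeAppend k ω σ i = σ (i - k) := by
  rcases hi.eq_or_lt with rfl | hi
  · simp [crusadeAppend, h]
  · simp [crusadeAppend, hi.not_ge]

def crusadeEraseIdx (ω : ℕ → Finset V) (m : ℕ) : ℕ → Finset V :=
  fun j => if j < m then ω j else ω (j + 1)

section Crusade

variable (G : SimpleGraph V) [DecidableRel G.Adj] {A B C X : Finset V} {k l i : ℕ}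
  {ω σ : ℕ → Finset V}

lemma width_le_iff {c : ℕ} : width G k ω ≤ c ↔ ∀ i ∈ Icc 1 k, cut G (ω i) ≤ c :=
  Finset.sup_le_iff

lemma cut_le_width (h1 : 1 ≤ i) (h2 : i ≤ k) : cut G (ω i) ≤ width G k ω :=
  (width_le_iff G).1 le_rfl i (mem_Icc.2 ⟨h1, h2⟩)

lemma width_update_zero : width G k (Function.update ω 0 X) = width G k ω :=
  Finset.sup_congr rfl fun i hi => by
    rw [Function.update_of_ne (by simp at hi; omega)]

lemma width_update_le {c : ℕ} (hX : cut G X ≤ c) (hω : width G k ω ≤ c) :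
    width G k (Function.update ω i X) ≤ c := by
  refine (width_le_iff G).2 fun j hj => ?_
  rcases eq_or_ne j i with rfl | hji
  · simpa using hX
  · simpa [hji] using (width_le_iff G).1 hω j hj

lemma width_union_le (e : Finset V) :
    width G k (fun i => ω i ∪ e) ≤ width G k ω + G.maxDegree * #e :=
  (width_le_iff G).2 fun _ hi => (cut_union_le G _ e).trans <|
    Nat.add_le_add_right (cut_le_width G (mem_Icc.1 hi).1 (mem_Icc.1 hi).2) _

lemma width_drop_le : width G (k - i) (fun j => ω (i + j)) ≤ width G k ω :=
  (width_le_iff G).2 fun j hj => cut_le_width G (by simp at hj; omega) (by simp at hj; omega)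

lemma width_append_le :
    width G (k + l) (crusadeAppend k ω σ) ≤ max (width G k ω) (width G l σ) := by
  refine (width_le_iff G).2 fun j hj => ?_
  obtain ⟨hj1, hj2⟩ := mem_Icc.1 hj
  by_cases hjk : j ≤ k
  · simpa [crusadeAppend, hjk] using Or.inl (cut_le_width G hj1 hjk)
  · simpa [crusadeAppend, hjk] using Or.inr (cut_le_width G (by omega) (by omega : j - k ≤ l))

lemma width_eraseIdx_le : width G (k - 1) (crusadeEraseIdx ω i) ≤ width G k ω := by
  refine (width_le_iff G).2 fun j hj => ?_
  obtain ⟨hj1, hj2⟩ := mem_Icc.1 hj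
  unfold crusadeEraseIdx
  split_ifs
  · exact cut_le_width G hj1 (by omega)
  · exact cut_le_width G (by omega) (by omega)

lemma two_mul_width_le {S T : Finset V} (hS : ∀ i, S ⊆ ω i) (hT : ∀ i, ω i ⊆ T) :
    2 * width G k ω ≤ cut G S + cut G T + G.maxDegree * (#T - #S) := by
  rw [mul_comm, ← Nat.le_div_iff_mul_le two_pos]
  refine (width_le_iff G).2 fun i _ => ?_
  rw [Nat.le_div_iff_mul_le two_pos, mul_comm]
  exact two_mul_cut_le G (hS i) (hT i)

namespace IsCrusade

lemma update_zero (h : IsCrusade A B k ω) (hk : 0 < k) (hX : #(X \ ω 1) ≤ 1) :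
    IsCrusade X B k (Function.update ω 0 X) := by
  refine ⟨by simp, by simpa [hk.ne'] using h.2.1, fun j hj => ?_⟩
  rcases Nat.eq_zero_or_pos j with rfl | hj0
  · simpa using hX
  · simpa [hj0.ne'] using h.2.2 j hj

lemma update (h : IsCrusade A B k ω) (hi : i + 1 < k) (h₁ : #(ω i \ X) ≤ 1)
    (h₂ : #(X \ ω (i + 2)) ≤ 1) : IsCrusade A B k (Function.update ω (i + 1) X) := by
  refine ⟨by simp [h.1], by simp [Function.update_of_ne hi.ne', h.2.1], fun j hj => ?_⟩
  by_cases hji : j = i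
  · simpa [hji] using h₁
  by_cases hji' : j = i + 1
  · simpa [hji'] using h₂
  · simpa [Function.update_of_ne hji', Function.update_of_ne (by omega : j + 1 ≠ i + 1)]
      using h.2.2 j hj

lemma update_inter (h : IsCrusade A B k ω) (hi : i + 1 < k) :
    IsCrusade A B k (Function.update ω (i + 1) (ω i ∩ ω (i + 1))) :=
  h.update hi (by rw [sdiff_inter_self_left]; exact h.2.2 i (by omega))
    ((card_le_card (sdiff_subset_sdiff inter_subset_right le_rfl)).trans (h.2.2 (i + 1) hi))

lemma update_union (h : IsCrusade A B k ω) (hi : i + 1 < k) :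
    IsCrusade A B k (Function.update ω (i + 1) (ω (i + 1) ∪ ω (i + 2))) :=
  h.update hi ((card_le_card (sdiff_subset_sdiff le_rfl subset_union_left)).trans
    (h.2.2 i (by omega))) (by rw [union_sdiff_right]; exact h.2.2 (i + 1) hi)

lemma union_right (h : IsCrusade A B k ω) (e : Finset V) :
    IsCrusade (A ∪ e) (B ∪ e) k (fun i => ω i ∪ e) :=
  ⟨by simp only [h.1], by simp only [h.2.1], fun j hj =>
    (card_le_card fun x => by simp only [mem_sdiff, mem_union]; tauto).trans (h.2.2 j hj)⟩

lemma drop (h : IsCrusade A B k ω) (hj : i ≤ k) :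
    IsCrusade (ω i) B (k - i) (fun j => ω (i + j)) :=
  ⟨rfl, by simpa [Nat.add_sub_cancel' hj] using h.2.1, fun j hj' => h.2.2 (i + j) (by omega)⟩

lemma append (hω : IsCrusade A B k ω) (hσ : IsCrusade B C l σ) :
    IsCrusade A C (k + l) (crusadeAppend k ω σ) := by
  have hge : ∀ j, k ≤ j → crusadeAppend k ω σ j = σ (j - k) :=
    fun j hj => crusadeAppend_of_le (hω.2.1.trans hσ.1.symm) hj
  refine ⟨by simp [crusadeAppend, hω.1], by rw [hge _ (by omega), Nat.add_sub_cancel_left, hσ.2.1],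
    fun j hj => ?_⟩
  rcases lt_or_ge j k with hjk | hjk
  · simpa [crusadeAppend, hjk.le, Nat.succ_le_of_lt hjk] using hω.2.2 j hjk
  · rw [hge j hjk, hge (j + 1) (by omega), Nat.sub_add_comm hjk]
    exact hσ.2.2 _ (by omega)

lemma eraseIdx (h : IsCrusade A B k ω) (hi : i < k) (heq : ω (i + 1) = ω i) :
    IsCrusade A B (k - 1) (crusadeEraseIdx ω (i + 1)) := by
  refine ⟨by simp [crusadeEraseIdx, h.1], ?_, fun j hj => ?_⟩
  · unfold crusadeEraseIdx
    split_ifs with hk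
    · rw [show k - 1 = i by omega, ← heq, show i + 1 = k by omega, h.2.1]
    · rw [Nat.sub_add_cancel (by omega), h.2.1]
  · unfold crusadeEraseIdx
    split_ifs with h1 h2 h2
    · exact h.2.2 j (by omega)
    · rw [show j = i by omega, ← heq]
      exact h.2.2 (i + 1) (by omega)
    · omega
    · exact h.2.2 (j + 1) (by omega)

end IsCrusade

lemma IsMonotone.append (hω : IsMonotone k ω) (hσ : IsMonotone l σ) (h : ω k = σ 0) :
    IsMonotone (k + l) (crusadeAppend k ω σ) := by
  intro j hj
  rcases lt_or_ge j k with hjk | hjk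
  · simpa [crusadeAppend, hjk.le, Nat.succ_le_of_lt hjk] using hω j hjk
  · rw [crusadeAppend_of_le h hjk, crusadeAppend_of_le h (by omega), Nat.sub_add_comm hjk]
    exact hσ _ (by omega)

lemma exists_monotone_crusade_of_subset {S T : Finset V} (h : S ⊆ T) :
    ∃ m D, IsCrusade T S m D ∧ IsMonotone m D ∧ ∀ i, S ⊆ D i ∧ D i ⊆ T := by
  set L := (T \ S).toList
  have hD : ∀ i (hi : i < L.length), S ∪ (L.drop i).toFinset =
      insert L[i] (S ∪ (L.drop (i + 1)).toFinset) := fun i hi => by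
    rw [List.drop_eq_getElem_cons hi, List.toFinset_cons, union_insert]
  refine ⟨L.length, fun i => S ∪ (L.drop i).toFinset,
    ⟨by simp [L, union_sdiff_of_subset h], by simp, fun i hi => ?_⟩, fun i hi => ?_, fun i => ?_⟩
  · refine (card_le_card (t := {L[i]}) fun x hx => ?_).trans (card_singleton _).le
    simp only [hD i hi, mem_sdiff, mem_insert] at hx
    exact mem_singleton.2 (hx.1.resolve_right hx.2)
  · exact union_subset_union_right fun x hx =>
      List.mem_toFinset.2 (List.drop_subset_drop_left L (Nat.le_succ i) (List.mem_toFinset.1 hx))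
  · refine ⟨subset_union_left, union_subset h fun x hx => ?_⟩
    have := List.mem_of_mem_drop (List.mem_toFinset.1 hx)
    simp only [L, mem_toList, mem_sdiff] at this
    exact this.1

end Crusade

lemma Nat.exists_eq_two_of_le_add_one {c : ℕ → ℕ} {k : ℕ} (h0 : 2 ≤ c 0) (hk : c k ≤ 1)
    (hstep : ∀ i < k, c i ≤ c (i + 1) + 1) : ∃ l < k, c l = 2 ∧ c (l + 1) = 1 := by
  induction k generalizing c with
  | zero => omega
  | succ k ih =>
    by_cases h1 : 2 ≤ c 1
    · obtain ⟨l, hl, hcl⟩ := ih (c := fun i => c (i + 1)) h1 hk fun i hi => hstep (i + 1) (by omega)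
      exact ⟨l + 1, by omega, hcl⟩
    · have := hstep 0 (by omega)
      rw [zero_add] at this
      exact ⟨0, by omega, by omega, show c 1 = 1 by omega⟩

section Resilience

variable (G : SimpleGraph V) [DecidableRel G.Adj] {A X Y : Finset V} {k i : ℕ} {ω : ℕ → Finset V}

lemma resilience_le_width (h : IsCrusade A ∅ k ω) : resilience G A ≤ width G k ω :=
  Nat.sInf_le ⟨k, ω, h, rfl⟩

lemma exists_width_eq_resilience (A : Finset V) :
    ∃ k ω, IsCrusade A ∅ k ω ∧ width G k ω = resilience G A := by
  obtain ⟨m, D, hD, -⟩ := exists_monotone_crusade_of_subset (empty_subset A)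
  exact Nat.sInf_mem (s := {w | ∃ k ω, IsCrusade A ∅ k ω ∧ width G k ω = w}) ⟨_, m, D, hD, rfl⟩

lemma resilience_le_width_of_le (h : IsCrusade A ∅ k ω) (hi : i ≤ k) :
    resilience G (ω i) ≤ width G k ω :=
  (resilience_le_width G (h.drop hi)).trans (width_drop_le G)

lemma isCrusade_of_card_le_one (h : #X ≤ 1) :
    IsCrusade X ∅ 1 (fun i => if i = 0 then X else ∅) :=
  ⟨rfl, rfl, fun i hi => by simpa [Nat.lt_one_iff.1 hi] using h⟩

lemma resilience_eq_zero_of_card_le_one (h : #X ≤ 1) : resilience G X = 0 :=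
  Nat.eq_zero_of_le_zero <| (resilience_le_width G (isCrusade_of_card_le_one h)).trans <|
    (width_le_iff G).2 fun i hi => by simp [show i ≠ 0 by simp at hi; omega]

lemma two_mul_resilience_le (A : Finset V) : 2 * resilience G A ≤ cut G A + G.maxDegree * #A := by
  obtain ⟨m, D, hD, -, hSD⟩ := exists_monotone_crusade_of_subset (empty_subset A)
  calc 2 * resilience G A ≤ 2 * width G m D := Nat.mul_le_mul_left 2 (resilience_le_width G hD)
    _ ≤ cut G A + G.maxDegree * #A := by
      simpa using two_mul_width_le G (fun i => (hSD i).1) (fun i => (hSD i).2)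

lemma resilience_le_resilience_add_maxDegree (h : #(X \ Y) ≤ 1) :
    resilience G X ≤ resilience G Y + G.maxDegree := by
  obtain ⟨m, σ, hσ, hw⟩ := exists_width_eq_resilience G Y
  rcases Nat.eq_zero_or_pos m with rfl | hm
  · rw [resilience_eq_zero_of_card_le_one G (by simpa [← hσ.1, hσ.2.1] using h)]
    exact Nat.zero_le _
  -- the crusade `X, σ₁ ∪ e, …, σₘ ∪ e = e, ∅` with `e = X \ Y`
  set e := X \ Y
  have hX : #(X \ (σ 1 ∪ e)) ≤ 1 := (card_le_card fun x => by
    simp only [e, ← hσ.1, mem_sdiff, mem_union]; tauto).trans (hσ.2.2 0 hm)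
  have hτ : IsCrusade X ∅ (m + 1) (crusadeAppend m (Function.update (fun i => σ i ∪ e) 0 X)
      (fun i => if i = 0 then e else ∅)) :=
    IsCrusade.append (by simpa [hσ.2.1] using ((hσ.union_right e).update_zero hm hX))
      (isCrusade_of_card_le_one h)
  calc resilience G X ≤ _ := resilience_le_width G hτ
    _ ≤ _ := width_append_le G
    _ ≤ resilience G Y + G.maxDegree := by
      refine max_le ?_ ?_
      · rw [width_update_zero, ← hw]
        exact (width_union_le G e).trans (by simpa using Nat.mul_le_mul_left _ h)
      · exact (width_le_iff G).2 fun i hi => by simp [show i ≠ 0 by simp at hi; omega]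

lemma IsCrusade.exists_card_eq_two (h : IsCrusade A ∅ k ω) (hA : 2 ≤ #A) :
    ∃ l < k, #(ω l) = 2 ∧ #(ω (l + 1)) = 1 :=
  Nat.exists_eq_two_of_le_add_one (c := fun i => #(ω i)) (by simpa [h.1]) (by simp [h.2.1])
    fun i hi => card_le_card_sdiff_add_card.trans <| by
      rw [add_comm]
      exact Nat.add_le_add_left (h.2.2 i hi) _

variable {G}

lemma resilience_pos (hconn : G.Connected) (hX : 2 ≤ #X) : 0 < resilience G X := by
  obtain ⟨k, ω, hω, hw⟩ := exists_width_eq_resilience G X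
  obtain ⟨l, hl, -, hl1⟩ := hω.exists_card_eq_two hX
  obtain ⟨u, hu⟩ := card_eq_one.1 hl1
  obtain ⟨v, hvX, hvu⟩ := exists_mem_ne (by omega : 1 < #X) u
  calc 0 < cut G (ω (l + 1)) :=
        cut_pos G hconn (by simp [hu]) ⟨v, by simpa [hu] using hvu⟩
    _ ≤ resilience G X := hw ▸ cut_le_width G (by omega) hl

lemma two_le_card_of_resilience_pos (h : 0 < resilience G X) : 2 ≤ #X := by
  by_contra hX
  rw [resilience_eq_zero_of_card_le_one G (by omega)] at h
  exact h.false

lemma IsCrusade.exists_improvement_bag (hconn : G.Connected) (h : IsCrusade A ∅ k ω)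
    (hA : 2 ≤ #A) :
    ∃ l ≤ k, ∃ v ∈ ω l, resilience G ((ω l).erase v) < resilience G (ω l) := by
  obtain ⟨l, hl, hl2, -⟩ := h.exists_card_eq_two hA
  obtain ⟨v, hv⟩ := card_pos.1 (by omega : 0 < #(ω l))
  refine ⟨l, hl.le, v, hv, ?_⟩
  rw [resilience_eq_zero_of_card_le_one G (by rw [card_erase_of_mem hv]; omega)]
  exact resilience_pos hconn hl2.ge

end Resilience

section CutWidth

variable {G : SimpleGraph V} [DecidableRel G.Adj] {A X : Finset V} {k : ℕ} {ω : ℕ → Finset V}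

lemma two_mul_cutWidth_le (hω : IsCrusade X ∅ k ω) (hmono : IsMonotone k ω)
    (hlt : width G k ω < cutWidth G) :
    2 * cutWidth G ≤ cut G X + G.maxDegree * (Fintype.card V - #X) := by
  obtain ⟨m, D, hD, hDmono, hXD⟩ := exists_monotone_crusade_of_subset (subset_univ X)
  have hW : cutWidth G ≤ width G (m + k) (crusadeAppend m D ω) :=
    Nat.sInf_le ⟨_, _, hD.append hω, hDmono.append hmono (hD.2.1.trans hω.1.symm), rfl⟩
  have hWD : cutWidth G ≤ width G m D := by
    have := hW.trans (width_append_le G)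
    omega
  calc 2 * cutWidth G ≤ 2 * width G m D := Nat.mul_le_mul_left 2 hWD
    _ ≤ _ := by simpa using two_mul_width_le G (fun i => (hXD i).1) (fun i => (hXD i).2)

lemma cut_add_two_mul_cutWidth_le (h : IsCrusade A ∅ k ω) (hk : 0 < k)
    (hmono : ∀ i, 1 ≤ i → i < k → ω (i + 1) ⊆ ω i) (hw : width G k ω ≤ resilience G A)
    (hlt : resilience G A < cutWidth G) :
    cut G (ω 1) + 2 * cutWidth G ≤ cut G A + (Fintype.card V + 1) * G.maxDegree := by
  set X := A ∪ ω 1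
  have hA1 : #(A \ ω 1) ≤ 1 := h.1 ▸ h.2.2 0 hk
  have hXmono : IsMonotone k (Function.update ω 0 X) := fun i hi => by
    rcases Nat.eq_zero_or_pos i with rfl | hi0
    · simp [X]
    · simpa [hi0.ne'] using hmono i hi0 hi
  have hW := two_mul_cutWidth_le (G := G) (h.update_zero hk (by rwa [union_sdiff_right])) hXmono
    (by rw [width_update_zero]; omega)
  have hγ := two_mul_resilience_le G A
  have h1 : cut G (ω 1) ≤ resilience G A := (cut_le_width G le_rfl hk).trans hw
  have hX : cut G X ≤ cut G (ω 1) + G.maxDegree := by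
    have := cut_union_le G (ω 1) (A \ ω 1)
    rw [union_sdiff_self_eq_union, union_comm] at this
    exact this.trans (by simpa using Nat.mul_le_mul_left G.maxDegree hA1)
  have hcard : G.maxDegree * #A + G.maxDegree * (Fintype.card V - #X) ≤
      G.maxDegree * Fintype.card V := by
    rw [← mul_add]
    have : #A ≤ #X := card_le_card subset_union_left
    have : #X ≤ Fintype.card V := card_le_univ X
    exact Nat.mul_le_mul_left _ (by omega)
  nlinarith

end CutWidth

/-- Ordering bags by `bagWeight` compares their cuts first and their sizes second. -/
def bagWeight (G : SimpleGraph V) [DecidableRel G.Adj] (X : Finset V) : ℕ :=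
  (Fintype.card V + 1) * cut G X + #X

def potential (G : SimpleGraph V) [DecidableRel G.Adj] (k : ℕ) (ω : ℕ → Finset V) : ℕ :=
  ∑ j ∈ range (k + 1), bagWeight G (ω j)

section Optimal

variable (G : SimpleGraph V) [DecidableRel G.Adj] {X Y : Finset V} {k i : ℕ} {ω : ℕ → Finset V}

lemma bagWeight_lt_of_cut_lt (h : cut G X < cut G Y) : bagWeight G X < bagWeight G Y := by
  have := card_le_univ X
  unfold bagWeight
  nlinarith

lemma bagWeight_lt_of_ssubset (h : cut G X ≤ cut G Y) (hXY : X ⊂ Y) :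
    bagWeight G X < bagWeight G Y :=
  Nat.add_lt_add_of_le_of_lt (Nat.mul_le_mul_left _ h) (card_lt_card hXY)

lemma potential_update_lt (hi : i ≤ k) (h : bagWeight G X < bagWeight G (ω i)) :
    potential G k (Function.update ω i X) < potential G k ω := by
  have hi' : i ∈ range (k + 1) := mem_range.2 (by omega)
  simp only [potential, Function.apply_update (fun _ => bagWeight G), sum_update_of_mem hi',
    sdiff_singleton_eq_erase, ← add_sum_erase _ _ hi']
  omega

lemma exists_optimal_crusade (A : Finset V) :
    ∃ k ω, IsCrusade A ∅ k ω ∧ width G k ω = resilience G A ∧ (∀ i < k, ω (i + 1) ≠ ω i) ∧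
      ∀ i, 1 ≤ i → i < k → ω (i + 1) ⊆ ω i := by
  let S : Set (ℕ × (ℕ → Finset V)) :=
    {p | IsCrusade A ∅ p.1 p.2 ∧ width G p.1 p.2 ≤ resilience G A}
  let f : ℕ × (ℕ → Finset V) → ℕ ×ₗ ℕ := fun p => toLex (p.1, potential G p.1 p.2)
  have hS : S.Nonempty := by
    obtain ⟨k, ω, h, hw⟩ := exists_width_eq_resilience G A
    exact ⟨(k, ω), h, hw.le⟩
  obtain ⟨⟨k, ω⟩, ⟨hω, hw⟩, hmin⟩ := (InvImage.wf f wellFounded_lt).has_min S hS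
  dsimp only at hω hw
  have hdup : ∀ i < k, ω (i + 1) ≠ ω i := fun i hi heq =>
    hmin (k - 1, crusadeEraseIdx ω (i + 1)) ⟨hω.eraseIdx hi heq, (width_eraseIdx_le G).trans hw⟩
      (Prod.Lex.toLex_lt_toLex.2 (Or.inl (by simp only; omega)))
  have hupdate : ∀ i X, i ≤ k → IsCrusade A ∅ k (Function.update ω i X) →
      cut G X ≤ resilience G A → ¬ bagWeight G X < bagWeight G (ω i) := fun i X hi hX hcut hlt =>
    hmin (k, Function.update ω i X) ⟨hX, width_update_le G hcut hw⟩
      (Prod.Lex.toLex_lt_toLex.2 (Or.inr ⟨rfl, potential_update_lt G hi hlt⟩))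
  refine ⟨k, ω, hω, le_antisymm hw (resilience_le_width G hω), hdup, fun i hi1 hik => ?_⟩
  obtain ⟨i, rfl⟩ : ∃ j, i = j + 1 := ⟨i - 1, by omega⟩
  rcases (show i + 2 ≤ k by omega).eq_or_lt with hk | hk
  · rw [show i + 1 + 1 = k by omega, hω.2.1]
    exact empty_subset _
  by_contra hsub
  have hcut : ∀ j, 1 ≤ j → j ≤ k → cut G (ω j) ≤ resilience G A :=
    fun j hj1 hjk => (cut_le_width G hj1 hjk).trans hw
  have hsubmod := cut_inter_add_cut_union_le G (ω (i + 1)) (ω (i + 2))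
  by_cases hc : cut G (ω (i + 1) ∩ ω (i + 2)) ≤ cut G (ω (i + 2))
  · exact hupdate (i + 2) _ hk.le (hω.update_inter hk) (hc.trans (hcut _ (by omega) hk.le))
      (bagWeight_lt_of_ssubset G hc (ssubset_of_subset_of_ne inter_subset_right
        fun h => hsub (h ▸ inter_subset_left)))
  · exact hupdate (i + 1) _ (by omega) (hω.update_union (by omega))
      (by have := hcut (i + 1) (by omega) (by omega); omega) (bagWeight_lt_of_cut_lt G (by omega))

end Optimal

theorem exists_good_optimal_crusade_general (G : SimpleGraph V) [DecidableRel G.Adj]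
    (hconn : G.Connected)
    (A : Finset V)
    (h0 : 0 < resilience G A) (hlt : resilience G A < cutWidth G) :
    ∃ (k : ℕ) (ω : ℕ → Finset V),
      IsCrusade A ∅ k ω ∧
      width G k ω = resilience G A ∧
      -- (i) consecutive bags are distinct
      (∀ i < k, ω (i + 1) ≠ ω i) ∧
      -- (ii) strictly monotone after the first step
      (∀ i, 1 ≤ i → i < k → ω (i + 1) ⊂ ω i) ∧
      -- (iii) resilience never exceeds that of A
      (∀ i ≤ k, resilience G (ω i) ≤ resilience G A) ∧
      -- (iv) γ(ω₁) ≥ γ(A) − Δ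
      resilience G A ≤ resilience G (ω 1) + G.maxDegree ∧
      -- (v) c(A) ≥ c(ω₁) − Δ(E + 2), i.e. c(A) + (n+4)Δ ≥ c(ω₁) + 2W
      cut G (ω 1) + 2 * cutWidth G ≤
        cut G A + (Fintype.card V + 4) * G.maxDegree ∧
      -- (vi) an improvement bag is encountered
      (∃ l ≤ k, ∃ v ∈ ω l, resilience G ((ω l).erase v) < resilience G (ω l)) := by
  have hA := two_le_card_of_resilience_pos h0
  obtain ⟨k, ω, hω, hw, hne, hmono⟩ := exists_optimal_crusade G A
  have hk : 0 < k := Nat.pos_of_ne_zero fun hk => by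
    have : A = ∅ := by rw [← hω.1, ← hω.2.1, hk]
    simp [this] at hA
  refine ⟨k, ω, hω, hw, hne, fun i h1 h2 => ssubset_of_subset_of_ne (hmono i h1 h2) (hne i h2),
    fun i hi => hw ▸ resilience_le_width_of_le G hω hi,
    resilience_le_resilience_add_maxDegree G (hω.1 ▸ hω.2.2 0 hk), ?_,
    hω.exists_improvement_bag hconn hA⟩
  calc cut G (ω 1) + 2 * cutWidth G ≤ cut G A + (Fintype.card V + 1) * G.maxDegree :=
        cut_add_two_mul_cutWidth_le hω hk hmono hw.le hlt
    _ ≤ cut G A + (Fintype.card V + 4) * G.maxDegree := by gcongr; omega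

theorem exists_good_optimal_crusade (G : SimpleGraph V) [DecidableRel G.Adj]
    (hconn : G.Connected) (hΔ : 0 < G.maxDegree)
    (hW : G.maxDegree ≤ cutWidth G)
    (A : Finset V) (hA : A.Nonempty)
    (h0 : 0 < resilience G A) (hlt : resilience G A < cutWidth G) :
    ∃ (k : ℕ) (ω : ℕ → Finset V),
      IsCrusade A ∅ k ω ∧
      width G k ω = resilience G A ∧
      -- (i) consecutive bags are distinct
      (∀ i < k, ω (i + 1) ≠ ω i) ∧
      -- (ii) strictly monotone after the first step
      (∀ i, 1 ≤ i → i < k → ω (i + 1) ⊂ ω i) ∧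
      -- (iii) resilience never exceeds that of A
      (∀ i ≤ k, resilience G (ω i) ≤ resilience G A) ∧
      -- (iv) γ(ω₁) ≥ γ(A) − Δ
      resilience G A ≤ resilience G (ω 1) + G.maxDegree ∧
      -- (v) c(A) ≥ c(ω₁) − Δ(E + 2), i.e. c(A) + (n+4)Δ ≥ c(ω₁) + 2W
      cut G (ω 1) + 2 * cutWidth G ≤
        cut G A + (Fintype.card V + 4) * G.maxDegree ∧
      -- (vi) an improvement bag is encountered
      (∃ l ≤ k, ∃ v ∈ ω l, resilience G ((ω l).erase v) < resilience G (ω l)) :=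
  exists_good_optimal_crusade_general G hconn A h0 hlt
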